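/- (Mumford representation.) Let g ≥ 1 and let f ∈ ℚ[X] be a square-free monic polynomial of degree 2g+1, and set S = ℚ[X,Y]/(Y² − f) with y the image of Y. Then every element of the class group of S is the class of an ideal (a, y − b) for a unique pair (a, b) ∈ ℚ[X]² such that a is monic, deg b < deg a ≤ g, and a divides b² − f. -/

import Mathlib

/-!
Work in `QuadraticAlgebra K[X] f 0`, whose elements are `u + v ω` with `ω² = f`. If `c`
generates the ideal of `ω`-coordinates of a nonzero ideal `J`, then `J = (c) J'` with some
`ω - b ∈ J'`, and a generator `a` of `J' ∩ K[X]` gives `J' = (a, ω - b)` and `a ∣ b² - f`.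
When `b² - f = a c`, the identity `(c)(a, ω - b) = (ω - b)(c, ω + b)` puts `(a, ω - b)` and
`(c, ω + b)` in the same class, and `deg c < deg a` as long as `g < deg a` and `deg b < deg a`;
so after making `a` monic and reducing `b` modulo `a`, iterating reaches `deg a ≤ g`.

Uniqueness is a degree count with the norm `N(u + v ω) = u² - f v²`: if `v ≠ 0` it has odd
degree at least `2g + 1`, so a nonzero element of `(a, ω - b)` with `deg a ≤ g` has norm of
degree at least `2 deg a`, with equality only if it lies in `K[X]`. Hence two reduced ideals in
the same class differ by a factor from `K[X]`, a unit since both contain an element with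
`ω`-coordinate `1`; and `(a, ω - b)` determines `a` and `b mod a`.
-/

open Polynomial

noncomputable section

/-- The quadratic algebra `S = R[Y]/(Y² - D)`. -/
abbrev QAlg (R : Type) [CommRing R] (D : R) : Type := AdjoinRoot ((X : R[X]) ^ 2 - C D)

/-- The image `y` of `Y` in `R[Y]/(Y² - D)`. -/
abbrev qY (R : Type) [CommRing R] (D : R) : QAlg R D := AdjoinRoot.root _

/-- The structure map `R → R[Y]/(Y² - D)`. -/
abbrev qι (R : Type) [CommRing R] (D : R) : R →+* QAlg R D := AdjoinRoot.of _

/-- An ideal is invertible as a fractional ideal iff its product with some ideal is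
a nonzero principal ideal. -/
def IsInvIdeal {S : Type*} [CommRing S] (I : Ideal S) : Prop :=
  ∃ (J : Ideal S) (r : S), r ≠ 0 ∧ I * J = Ideal.span {r}

/-- Two invertible ideals of a domain have the same class in the class group iff they agree
up to nonzero principal multiples. -/
def ClassEq {S : Type*} [CommRing S] (I J : Ideal S) : Prop :=
  ∃ s t : S, s ≠ 0 ∧ t ≠ 0 ∧ Ideal.span {s} * I = Ideal.span {t} * J

open QuadraticAlgebra

theorem qY_sq (R : Type) [CommRing R] (D : R) : qY R D ^ 2 = qι R D D := by
  have h := AdjoinRoot.mk_self (f := (X : R[X]) ^ 2 - C D)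
  simp only [map_sub, map_pow, AdjoinRoot.mk_X, AdjoinRoot.mk_C] at h
  exact sub_eq_zero.mp h

def QAlg.equivQuadraticAlgebra (R : Type) [CommRing R] (D : R) :
    QAlg R D ≃ₐ[R] QuadraticAlgebra R D 0 :=
  AlgEquiv.ofAlgHom
    (AdjoinRoot.liftAlgHom _ (Algebra.ofId R _) ω
      (by simp [omega_mul_omega_eq_mk, sq]; ext <;> simp))
    (QuadraticAlgebra.lift ⟨qY R D, by
      rw [← sq, qY_sq, zero_smul, add_zero, Algebra.smul_def, mul_one]; rfl⟩)
    (QuadraticAlgebra.algHom_ext (by simp [AdjoinRoot.liftAlgHom_root]))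
    (AdjoinRoot.algHom_ext (by simp [AdjoinRoot.liftAlgHom_root]))

@[simp] theorem QAlg.equivQuadraticAlgebra_qY (R : Type) [CommRing R] (D : R) :
    QAlg.equivQuadraticAlgebra R D (qY R D) = ω := by
  simp [QAlg.equivQuadraticAlgebra]

@[simp] theorem QAlg.equivQuadraticAlgebra_qι (R : Type) [CommRing R] (D r : R) :
    QAlg.equivQuadraticAlgebra R D (qι R D r) = algebraMap R _ r :=
  (QAlg.equivQuadraticAlgebra R D).commutes r

theorem Ideal.eq_span_singleton_mul_colon {S : Type*} [CommRing S] {I : Ideal S} {x : S}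
    (h : I ≤ Ideal.span {x}) : I = Ideal.span {x} * I.colon {x} := by
  ext z
  rw [Ideal.mem_span_singleton_mul]
  constructor
  · intro hz
    obtain ⟨w, rfl⟩ := Ideal.mem_span_singleton.mp (h hz)
    exact ⟨w, Submodule.mem_colon_singleton.mpr (by rwa [smul_eq_mul, mul_comm]), rfl⟩
  · rintro ⟨w, hw, rfl⟩
    rw [mul_comm]
    exact Submodule.mem_colon_singleton.mp hw

section ClassEq

variable {S T : Type*} [CommRing S] [CommRing T] {I J K : Ideal S}

theorem IsInvIdeal.ne_bot (h : IsInvIdeal I) : I ≠ ⊥ := by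
  rintro rfl
  obtain ⟨J, r, hr, hJ⟩ := h
  rw [Ideal.bot_mul, eq_comm, Ideal.span_singleton_eq_bot] at hJ
  exact hr hJ

theorem ClassEq.refl [Nontrivial S] (I : Ideal S) : ClassEq I I :=
  ⟨1, 1, one_ne_zero, one_ne_zero, rfl⟩

theorem ClassEq.symm (h : ClassEq I J) : ClassEq J I :=
  let ⟨s, t, hs, ht, h⟩ := h
  ⟨t, s, ht, hs, h.symm⟩

theorem ClassEq.trans [IsDomain S] (h₁ : ClassEq I J) (h₂ : ClassEq J K) : ClassEq I K := by
  obtain ⟨s₁, t₁, hs₁, ht₁, h₁⟩ := h₁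
  obtain ⟨s₂, t₂, hs₂, ht₂, h₂⟩ := h₂
  refine ⟨s₂ * s₁, t₁ * t₂, mul_ne_zero hs₂ hs₁, mul_ne_zero ht₁ ht₂, ?_⟩
  simp only [← Ideal.span_singleton_mul_span_singleton]
  rw [mul_assoc, h₁, mul_left_comm, h₂, mul_assoc]

theorem ClassEq.map (e : S ≃+* T) (h : ClassEq I J) : ClassEq (I.map e) (J.map e) := by
  obtain ⟨s, t, hs, ht, h⟩ := h
  refine ⟨e s, e t, (map_ne_zero_iff e e.injective).mpr hs,
    (map_ne_zero_iff e e.injective).mpr ht, ?_⟩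
  simpa only [Ideal.map_mul, Ideal.map_span, Set.image_singleton] using congrArg (Ideal.map e) h

theorem classEq_map_iff (e : S ≃+* T) : ClassEq (I.map e) (J.map e) ↔ ClassEq I J :=
  ⟨fun h => by
    simpa only [Ideal.map_symm, Ideal.comap_map_of_bijective _ e.bijective] using h.map e.symm,
    ClassEq.map e⟩

end ClassEq

namespace QuadraticAlgebra

variable {R : Type*} [CommRing R] {D : R}

theorem norm_eq_sq_sub (z : QuadraticAlgebra R D 0) : norm z = z.re ^ 2 - D * z.im ^ 2 := by
  rw [norm_def]; ring

end QuadraticAlgebra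

/-- The ideal `(a, y - b)`, with `y = ω`. -/
def mumfordIdeal {R : Type*} [CommRing R] (D a b : R) : Ideal (QuadraticAlgebra R D 0) :=
  Ideal.span {algebraMap R _ a, ω - algebraMap R _ b}

section CommRing

variable {R : Type*} [CommRing R] {D a b c : R}

theorem algebraMap_mem_mumfordIdeal : algebraMap R _ a ∈ mumfordIdeal D a b :=
  Ideal.subset_span (Set.mem_insert _ _)

theorem omega_sub_algebraMap_mem_mumfordIdeal : ω - algebraMap R _ b ∈ mumfordIdeal D a b :=
  Ideal.subset_span (Set.mem_insert_of_mem _ rfl)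

theorem omega_sub_algebraMap_ne_zero [Nontrivial R] (r : R) :
    ω - algebraMap R (QuadraticAlgebra R D 0) r ≠ 0 := fun h => by
  simpa using congrArg QuadraticAlgebra.im h

theorem mem_mumfordIdeal (h : a ∣ b ^ 2 - D) {z : QuadraticAlgebra R D 0} :
    z ∈ mumfordIdeal D a b ↔ a ∣ z.re + b * z.im := by
  constructor
  · intro hz
    obtain ⟨r, s, rfl⟩ := Ideal.mem_span_pair.mp hz
    obtain ⟨c, hc⟩ := h
    exact ⟨r.re + b * r.im - s.im * c, by simp; linear_combination (- s.im) * hc⟩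
  · rintro ⟨q, hq⟩
    refine Ideal.mem_span_pair.mpr ⟨algebraMap R _ q, algebraMap R _ z.im, ?_⟩
    ext <;> simp; linear_combination -hq

theorem dvd_sq_sub_of_dvd_sub {b' : R} (h : a ∣ b ^ 2 - D) (hb : a ∣ b - b') :
    a ∣ b' ^ 2 - D := by
  rw [show b' ^ 2 - D = b ^ 2 - D - (b - b') * (b + b') by ring]
  exact dvd_sub h (dvd_mul_of_dvd_left hb _)

theorem mumfordIdeal_congr {a' b' : R} (h : a ∣ b ^ 2 - D) (ha : Associated a a')
    (hb : a ∣ b - b') : mumfordIdeal D a b = mumfordIdeal D a' b' := by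
  have h' : a' ∣ b' ^ 2 - D := ha.dvd_iff_dvd_left.mp (dvd_sq_sub_of_dvd_sub h hb)
  ext z
  rw [mem_mumfordIdeal h, mem_mumfordIdeal h', ← ha.dvd_iff_dvd_left,
    show z.re + b' * z.im = z.re + b * z.im - (b - b') * z.im by ring,
    dvd_sub_left (dvd_mul_of_dvd_left hb _)]

theorem span_mul_mumfordIdeal (h : b ^ 2 - D = a * c) :
    Ideal.span {algebraMap R _ c} * mumfordIdeal D a b =
      Ideal.span {ω - algebraMap R _ b} * mumfordIdeal D c (-b) := by
  have hconj : (ω - algebraMap R (QuadraticAlgebra R D 0) b) * (ω - algebraMap R _ (-b)) =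
      -(algebraMap R _ c * algebraMap R _ a) := by
    ext <;> simp; linear_combination -h
  simp only [mumfordIdeal, Ideal.span_mul_span', Set.singleton_mul, Set.image_insert_eq,
    Set.image_singleton]
  rw [hconj, mul_comm (ω - _) (algebraMap R _ c), Ideal.span_pair_comm, Ideal.span_insert,
    Ideal.span_insert, Ideal.span_singleton_neg]

theorem dvd_of_span_mul_mumfordIdeal_le {n u a₁ b₁ a₂ b₂ : R}
    (h : Ideal.span {algebraMap R _ u} * mumfordIdeal D a₂ b₂ ≤
      Ideal.span {algebraMap R _ n} * mumfordIdeal D a₁ b₁) : n ∣ u := by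
  have hmem := h (Ideal.mul_mem_mul (Ideal.mem_span_singleton_self _)
    omega_sub_algebraMap_mem_mumfordIdeal)
  obtain ⟨w, -, hw⟩ := Ideal.mem_span_singleton_mul.mp hmem
  exact ⟨w.im, by simpa using (congrArg QuadraticAlgebra.im hw).symm⟩

theorem eq_mumfordIdeal_of_comap_eq {I : Ideal (QuadraticAlgebra R D 0)}
    (hb : ω - algebraMap R _ b ∈ I) (ha : I.comap (algebraMap R _) = Ideal.span {a}) :
    a ∣ b ^ 2 - D ∧ I = mumfordIdeal D a b := by
  have hmem (r : R) : algebraMap R _ r ∈ I ↔ a ∣ r := by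
    rw [← Ideal.mem_span_singleton, ← ha, Ideal.mem_comap]
  have hab : a ∣ b ^ 2 - D := by
    rw [← hmem]
    convert I.neg_mem (I.mul_mem_right (ω - algebraMap R _ (-b)) hb) using 1
    ext <;> simp [sq]; ring
  refine ⟨hab, Ideal.ext fun z => ?_⟩
  have hz : z = algebraMap R _ (z.re + b * z.im) +
      algebraMap R _ z.im * (ω - algebraMap R _ b) := by
    ext <;> simp; ring
  rw [mem_mumfordIdeal hab, ← hmem]
  conv_lhs => rw [hz]
  exact Ideal.add_mem_iff_left _ (I.mul_mem_left _ hb)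

end CommRing

section Domain

variable {R : Type*} [CommRing R] {D : R} [IsDomain (QuadraticAlgebra R D 0)]

theorem sq_sub_ne_zero (b : R) : b ^ 2 - D ≠ 0 := by
  have := (algebraMap R (QuadraticAlgebra R D 0)).domain_nontrivial
  intro h
  apply mul_ne_zero (omega_sub_algebraMap_ne_zero (D := D) b) (omega_sub_algebraMap_ne_zero (-b))
  ext <;> simp; linear_combination -h

theorem classEq_mumfordIdeal_of_sq_sub_eq {a b c : R} (h : b ^ 2 - D = a * c) (hc : c ≠ 0) :
    ClassEq (mumfordIdeal D a b) (mumfordIdeal D c (-b)) := by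
  have := (algebraMap R (QuadraticAlgebra R D 0)).domain_nontrivial
  exact ⟨algebraMap R _ c, ω - algebraMap R _ b, by simpa using hc,
    omega_sub_algebraMap_ne_zero b, span_mul_mumfordIdeal h⟩

theorem ClassEq.exists_span_algebraMap_mul {I J : Ideal (QuadraticAlgebra R D 0)}
    (h : ClassEq I J) : ∃ n : R, n ≠ 0 ∧ ∃ p, p ≠ 0 ∧
      Ideal.span {algebraMap R _ n} * I = Ideal.span {p} * J := by
  obtain ⟨s, t, hs, ht, h⟩ := h
  have hn : algebraMap R _ (norm s) = star s * s := by
    rw [algebraMap_norm_eq_mul_star, mul_comm]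
  refine ⟨norm s, fun h0 => ?_, star s * t, mul_ne_zero (star_ne_zero.mpr hs) ht, ?_⟩
  · exact mul_ne_zero (star_ne_zero.mpr hs) hs (by rw [← hn, h0, map_zero])
  · rw [hn, ← Ideal.span_singleton_mul_span_singleton, mul_assoc, h,
      ← mul_assoc, Ideal.span_singleton_mul_span_singleton]

theorem mumfordIdeal_eq_of_span_mul_eq {n u a₁ b₁ a₂ b₂ : R} (hn : n ≠ 0)
    (h : Ideal.span {algebraMap R _ n} * mumfordIdeal D a₁ b₁ =
      Ideal.span {algebraMap R _ u} * mumfordIdeal D a₂ b₂) :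
    mumfordIdeal D a₁ b₁ = mumfordIdeal D a₂ b₂ := by
  have hassoc : Associated (algebraMap R (QuadraticAlgebra R D 0) n) (algebraMap R _ u) :=
    associated_of_dvd_dvd (algebraMap_dvd_iff_dvd.mpr (dvd_of_span_mul_mumfordIdeal_le h.ge))
      (algebraMap_dvd_iff_dvd.mpr (dvd_of_span_mul_mumfordIdeal_le h.le))
  rwa [← Ideal.span_singleton_eq_span_singleton.mpr hassoc,
    Ideal.span_singleton_mul_right_inj (by simpa using hn)] at h

end Domain

theorem exists_classEq_mumfordIdeal {R : Type*} [CommRing R] [IsPrincipalIdealRing R] {D : R}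
    [IsDomain (QuadraticAlgebra R D 0)] {J : Ideal (QuadraticAlgebra R D 0)} (hJ : J ≠ ⊥) :
    ∃ a b : R, a ≠ 0 ∧ a ∣ b ^ 2 - D ∧ ClassEq J (mumfordIdeal D a b) := by
  -- `c` divides the `ω`-coordinates of `J`, hence also the other ones since `ω J ⊆ J`.
  set Jim : Ideal R := (J.restrictScalars R).map (imₗ D 0)
  set c := Submodule.IsPrincipal.generator Jim
  have hc_im (z) (hz : z ∈ J) : c ∣ z.im :=
    (Submodule.IsPrincipal.mem_iff_generator_dvd Jim).mp ⟨z, hz, rfl⟩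
  have hc_dvd (z) (hz : z ∈ J) : algebraMap R _ c ∣ z :=
    algebraMap_dvd_iff.mpr ⟨by simpa using hc_im _ (J.mul_mem_left ω hz), hc_im z hz⟩
  obtain ⟨ξ, hξ, hξc⟩ := Submodule.IsPrincipal.generator_mem Jim
  replace hξ : ξ ∈ J := hξ
  replace hξc : ξ.im = c := hξc
  obtain ⟨b, hb⟩ := (algebraMap_dvd_iff.mp (hc_dvd ξ hξ)).1
  have hc0 : algebraMap R (QuadraticAlgebra R D 0) c ≠ 0 := by
    obtain ⟨z, hz, hz0⟩ := Submodule.exists_mem_ne_zero_of_ne_bot hJ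
    exact fun h => hz0 (zero_dvd_iff.mp (h ▸ hc_dvd z hz))
  set J' := J.colon {algebraMap R (QuadraticAlgebra R D 0) c}
  have hJ' : J = Ideal.span {algebraMap R _ c} * J' :=
    Ideal.eq_span_singleton_mul_colon fun z hz => Ideal.mem_span_singleton.mpr (hc_dvd z hz)
  have hy : ω - algebraMap R _ (-b) ∈ J' := by
    rw [Submodule.mem_colon_singleton, smul_eq_mul]
    convert hξ using 1
    ext <;> simp [hb, ← hξc, mul_comm]
  obtain ⟨a, ha⟩ := Submodule.IsPrincipal.principal (J'.comap (algebraMap R _))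
  obtain ⟨hab, hJ'a⟩ := eq_mumfordIdeal_of_comap_eq hy (by rw [ha, Ideal.submodule_span_eq])
  refine ⟨a, -b, ne_zero_of_dvd_ne_zero (sq_sub_ne_zero _) hab, hab, 1, _, one_ne_zero, hc0, ?_⟩
  rw [Ideal.span_singleton_one, Ideal.top_mul, ← hJ'a, ← hJ']

theorem Polynomial.natDegree_sq_sub_mul_sq {R : Type*} [CommRing R] [IsDomain R]
    {f u v : R[X]} (hf : Odd f.natDegree) (hv : v ≠ 0) :
    (u ^ 2 - f * v ^ 2).natDegree = max (2 * u.natDegree) (f.natDegree + 2 * v.natDegree) := by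
  have hf0 : f ≠ 0 := by rintro rfl; simp at hf
  have hfv : (f * v ^ 2).natDegree = f.natDegree + 2 * v.natDegree := by
    rw [natDegree_mul hf0 (pow_ne_zero 2 hv), natDegree_pow, mul_comm]
  have hu : (u ^ 2).natDegree = 2 * u.natDegree := by rw [natDegree_pow, mul_comm]
  obtain ⟨k, hk⟩ := hf
  rcases lt_or_gt_of_ne (show 2 * u.natDegree ≠ f.natDegree + 2 * v.natDegree by omega) with h | h
  · rw [natDegree_sub_eq_right_of_natDegree_lt (by omega), hfv, max_eq_right h.le]
  · rw [natDegree_sub_eq_left_of_natDegree_lt (by omega), hu, max_eq_left h.le]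

namespace QuadraticAlgebra

variable {R : Type*} [CommRing R] [IsDomain R] {f : R[X]} {z : QuadraticAlgebra R[X] f 0}

theorem natDegree_le_natDegree_norm (hf : Odd f.natDegree) (hz : z.im ≠ 0) :
    f.natDegree ≤ (norm z).natDegree := by
  rw [norm_eq_sq_sub, natDegree_sq_sub_mul_sq hf hz]
  omega

theorem norm_ne_zero (hf : Odd f.natDegree) (hz : z ≠ 0) : norm z ≠ 0 := by
  by_cases him : z.im = 0
  · have hre : z.re ≠ 0 := fun hre => hz (QuadraticAlgebra.ext hre him)
    simpa [norm_eq_sq_sub, him] using hre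
  · intro h
    have := natDegree_le_natDegree_norm hf him
    rw [h, natDegree_zero] at this
    obtain ⟨k, hk⟩ := hf
    omega

theorem isDomain_of_odd_natDegree (hf : Odd f.natDegree) : IsDomain (QuadraticAlgebra R[X] f 0) :=
  have : NoZeroDivisors (QuadraticAlgebra R[X] f 0) := ⟨fun {z w} h => by
    by_contra! hzw
    exact mul_ne_zero (norm_ne_zero hf hzw.1) (norm_ne_zero hf hzw.2)
      (by rw [← map_mul, h, norm_zero])⟩
  NoZeroDivisors.to_isDomain _

end QuadraticAlgebra

def IsMumfordPair {K : Type*} [Field K] (f : K[X]) (g : ℕ) (p : K[X] × K[X]) : Prop :=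
  p.1.Monic ∧ p.2.degree < p.1.degree ∧ p.1.natDegree ≤ g ∧ p.1 ∣ p.2 ^ 2 - f

section Field

variable {K : Type*} [Field K] {f a b : K[X]}

theorem exists_monic_mumfordIdeal_eq (ha : a ≠ 0) (h : a ∣ b ^ 2 - f) :
    ∃ a' b' : K[X], a'.Monic ∧ b'.degree < a'.degree ∧ a'.natDegree = a.natDegree ∧
      a' ∣ b' ^ 2 - f ∧ mumfordIdeal f a' b' = mumfordIdeal f a b := by
  set a' := a * C a.leadingCoeff⁻¹
  have hassoc : Associated a a' := associated_mul_unit_right _ _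
    (isUnit_C.mpr (inv_ne_zero (leadingCoeff_ne_zero.mpr ha)).isUnit)
  have hm : a'.Monic := monic_mul_leadingCoeff_inv ha
  have hb : a ∣ b - b %ₘ a' := by
    rw [hassoc.dvd_iff_dvd_left, modByMonic_eq_sub_mul_div b a', sub_sub_cancel]
    exact dvd_mul_right _ _
  refine ⟨a', b %ₘ a', hm, degree_modByMonic_lt b hm, natDegree_mul_leadingCoeff_inv a ha,
    hassoc.dvd_iff_dvd_left.mp (dvd_sq_sub_of_dvd_sub h hb),
    (mumfordIdeal_congr h hassoc hb).symm⟩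

theorem natDegree_lt_of_sq_sub_eq_mul {c : K[X]} (hf : f.natDegree < 2 * a.natDegree)
    (hb : b.degree < a.degree) (h : b ^ 2 - f = a * c) (hc : c ≠ 0) :
    c.natDegree < a.natDegree := by
  have ha : a ≠ 0 := by rintro rfl; simp at hf
  have hb' : 2 * b.natDegree < 2 * a.natDegree := by
    rcases eq_or_ne b 0 with rfl | hb0
    · simp only [natDegree_zero]; omega
    · have := natDegree_lt_natDegree hb0 hb; omega
  have := natDegree_sub_le (b ^ 2) f
  rw [h, natDegree_mul ha hc, natDegree_pow] at this
  omega

theorem exists_isMumfordPair_classEq {g : ℕ} (hf : f.natDegree = 2 * g + 1) (ha : a ≠ 0)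
    (h : a ∣ b ^ 2 - f) :
    ∃ p, IsMumfordPair f g p ∧ ClassEq (mumfordIdeal f a b) (mumfordIdeal f p.1 p.2) := by
  have := isDomain_of_odd_natDegree (f := f) ⟨g, hf⟩
  induction hn : a.natDegree using Nat.strong_induction_on generalizing a b with
  | _ n ih =>
    obtain ⟨a₁, b₁, hm, hdeg, hnat, h₁, heq⟩ := exists_monic_mumfordIdeal_eq ha h
    rw [← heq]
    by_cases hg : a₁.natDegree ≤ g
    · exact ⟨(a₁, b₁), ⟨hm, hdeg, hg, h₁⟩, .refl _⟩
    obtain ⟨c, hc⟩ := h₁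
    have hc0 : c ≠ 0 := by rintro rfl; exact sq_sub_ne_zero b₁ (by rw [hc, mul_zero])
    have hlt := natDegree_lt_of_sq_sub_eq_mul (by omega) hdeg hc hc0
    obtain ⟨p, hp, hcl⟩ :=
      ih _ (hn ▸ hnat ▸ hlt) hc0 ⟨a₁, by rw [neg_sq, hc, mul_comm]⟩ rfl
    exact ⟨p, hp, (classEq_mumfordIdeal_of_sq_sub_eq hc hc0).trans hcl⟩

theorem two_mul_natDegree_le_natDegree_norm (hf : Odd f.natDegree)
    (ha : 2 * a.natDegree < f.natDegree) (h : a ∣ b ^ 2 - f)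
    {z : QuadraticAlgebra K[X] f 0} (hz : z ∈ mumfordIdeal f a b) (hz0 : z ≠ 0) :
    2 * a.natDegree ≤ (QuadraticAlgebra.norm z).natDegree := by
  by_cases him : z.im = 0
  · have hre : z.re ≠ 0 := fun hre => hz0 (QuadraticAlgebra.ext hre him)
    rw [mem_mumfordIdeal h, him, mul_zero, add_zero] at hz
    have hN : QuadraticAlgebra.norm z = z.re ^ 2 := by rw [norm_eq_sq_sub, him]; ring
    rw [hN, natDegree_pow]
    have := natDegree_le_of_dvd hz hre
    omega
  · have := natDegree_le_natDegree_norm hf him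
    omega

theorem im_eq_zero_of_mul_eq_algebraMap {a₁ b₁ a₂ : K[X]} (hf : Odd f.natDegree)
    (ha₁ : 2 * a₁.natDegree < f.natDegree) (ha₂ : 2 * a₂.natDegree < f.natDegree)
    (h₁ : a₁ ∣ b₁ ^ 2 - f) {q x : QuadraticAlgebra K[X] f 0}
    (hx : x ∈ mumfordIdeal f a₁ b₁) (ha : a₁ * a₂ ≠ 0)
    (h : q * x = algebraMap K[X] _ (a₁ * a₂)) : q.im = 0 := by
  have := isDomain_of_odd_natDegree hf
  have hq0 : q ≠ 0 := fun h0 => ha (algebraMap_injective (by rw [← h, h0, zero_mul, map_zero]))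
  have hx0 : x ≠ 0 := fun h0 => ha (algebraMap_injective (by rw [← h, h0, mul_zero, map_zero]))
  by_contra hq_im
  have hN := congrArg natDegree (congrArg QuadraticAlgebra.norm h)
  rw [map_mul, QuadraticAlgebra.norm_algebraMap, natDegree_mul (norm_ne_zero hf hq0)
    (norm_ne_zero hf hx0), natDegree_pow, natDegree_mul (left_ne_zero_of_mul ha)
    (right_ne_zero_of_mul ha)] at hN
  have := natDegree_le_natDegree_norm hf hq_im
  have := two_mul_natDegree_le_natDegree_norm hf ha₁ h₁ hx hx0
  omega

theorem mumfordIdeal_eq_of_classEq {a₁ b₁ a₂ b₂ : K[X]} (hf : Odd f.natDegree)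
    (ha₁ : 2 * a₁.natDegree < f.natDegree) (ha₂ : 2 * a₂.natDegree < f.natDegree)
    (h₁ : a₁ ∣ b₁ ^ 2 - f) (h₂ : a₂ ∣ b₂ ^ 2 - f)
    (h : ClassEq (mumfordIdeal f a₁ b₁) (mumfordIdeal f a₂ b₂)) :
    mumfordIdeal f a₁ b₁ = mumfordIdeal f a₂ b₂ := by
  have := isDomain_of_odd_natDegree hf
  have ha₁0 := ne_zero_of_dvd_ne_zero (sq_sub_ne_zero b₁) h₁
  have ha₂0 := ne_zero_of_dvd_ne_zero (sq_sub_ne_zero b₂) h₂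
  obtain ⟨n, hn, p, hp, h⟩ := h.exists_span_algebraMap_mul
  obtain ⟨q, -, hpq⟩ := Ideal.mem_span_singleton_mul.mp (h ▸ Ideal.mul_mem_mul
    (Ideal.mem_span_singleton_self (algebraMap K[X] _ n)) algebraMap_mem_mumfordIdeal)
  obtain ⟨x, hx, hnx⟩ := Ideal.mem_span_singleton_mul.mp (h.symm ▸ Ideal.mul_mem_mul
    (Ideal.mem_span_singleton_self p) algebraMap_mem_mumfordIdeal)
  -- `p q = n a₁` and `n x = p a₂` give `q x = a₁ a₂`; degrees of norms force `q`, and then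
  -- `p`, into `K[X]`.
  have hqx : q * x = algebraMap K[X] _ (a₁ * a₂) := by
    have hn' : algebraMap K[X] (QuadraticAlgebra K[X] f 0) n ≠ 0 := by simpa using hn
    refine mul_left_cancel₀ (mul_ne_zero hn' hp) ?_
    rw [map_mul]
    linear_combination (algebraMap K[X] _ n * x) * hpq +
      (algebraMap K[X] _ n * algebraMap K[X] _ a₁) * hnx
  have hq_im :=
    im_eq_zero_of_mul_eq_algebraMap hf ha₁ ha₂ h₁ hx (mul_ne_zero ha₁0 ha₂0) hqx
  have hq0 : q ≠ 0 := by rintro rfl; simp [ha₁0, ha₂0] at hqx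
  have hp_im : p.im = 0 := by
    have hq_re : q.re ≠ 0 := fun hre => hq0 (QuadraticAlgebra.ext hre hq_im)
    simpa [hq_im, hq_re] using congrArg QuadraticAlgebra.im hpq
  rw [show p = algebraMap K[X] _ p.re from QuadraticAlgebra.ext rfl hp_im] at h
  exact mumfordIdeal_eq_of_span_mul_eq hn h

theorem eq_of_mumfordIdeal_eq {a₁ b₁ a₂ b₂ : K[X]} (hm₁ : a₁.Monic) (hm₂ : a₂.Monic)
    (hb₁ : b₁.degree < a₁.degree) (hb₂ : b₂.degree < a₂.degree)
    (h₁ : a₁ ∣ b₁ ^ 2 - f) (h₂ : a₂ ∣ b₂ ^ 2 - f)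
    (h : mumfordIdeal f a₁ b₁ = mumfordIdeal f a₂ b₂) : a₁ = a₂ ∧ b₁ = b₂ := by
  have hdvd {a b a' b' : K[X]} (h' : a' ∣ b' ^ 2 - f)
      (hle : mumfordIdeal f a b ≤ mumfordIdeal f a' b') : a' ∣ a := by
    simpa using (mem_mumfordIdeal h').mp (hle algebraMap_mem_mumfordIdeal)
  have ha : a₁ = a₂ :=
    eq_of_monic_of_associated hm₁ hm₂ (associated_of_dvd_dvd (hdvd h₁ h.ge) (hdvd h₂ h.le))
  subst ha
  refine ⟨rfl, (sub_eq_zero.mp (eq_zero_of_dvd_of_degree_lt ?_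
    ((degree_sub_le _ _).trans_lt (max_lt hb₂ hb₁)))).symm⟩
  have hmem := omega_sub_algebraMap_mem_mumfordIdeal (D := f) (a := a₁) (b := b₁)
  rw [h, mem_mumfordIdeal h₂] at hmem
  simpa [neg_add_eq_sub] using hmem

theorem existsUnique_isMumfordPair_classEq {g : ℕ} (hf : f.natDegree = 2 * g + 1)
    {J : Ideal (QuadraticAlgebra K[X] f 0)} (hJ : J ≠ ⊥) :
    ∃! p, IsMumfordPair f g p ∧ ClassEq J (mumfordIdeal f p.1 p.2) := by
  have hodd : Odd f.natDegree := ⟨g, hf⟩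
  have := isDomain_of_odd_natDegree hodd
  obtain ⟨a, b, ha, hab, hJ⟩ := exists_classEq_mumfordIdeal hJ
  obtain ⟨p, hp, hJp⟩ := exists_isMumfordPair_classEq hf ha hab
  refine ⟨p, ⟨hp, hJ.trans hJp⟩, fun p' ⟨hp', hJp'⟩ => ?_⟩
  have := mumfordIdeal_eq_of_classEq hodd (by have := hp'.2.2.1; omega)
    (by have := hp.2.2.1; omega) hp'.2.2.2 hp.2.2.2
    (hJp'.symm.trans (hJ.trans hJp))
  obtain ⟨h₁, h₂⟩ := eq_of_mumfordIdeal_eq hp'.1 hp.1 hp'.2.1 hp.2.1 hp'.2.2.2 hp.2.2.2 this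
  exact Prod.ext h₁ h₂

end Field

theorem mumford_representation_general (g : ℕ) (f : ℚ[X]) (hdeg : f.natDegree = 2 * g + 1) :
    ∀ J : Ideal (QAlg (ℚ[X]) f), IsInvIdeal J →
      ∃! p : ℚ[X] × ℚ[X],
        (p.1.Monic ∧ p.2.degree < p.1.degree ∧ p.1.natDegree ≤ g ∧ p.1 ∣ p.2 ^ 2 - f) ∧
          ClassEq J (Ideal.span {qι (ℚ[X]) f p.1, qY (ℚ[X]) f - qι (ℚ[X]) f p.2}) := by
  intro J hJ
  set e := (QAlg.equivQuadraticAlgebra ℚ[X] f).toRingEquiv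
  have hspan (a b : ℚ[X]) :
      (Ideal.span {qι (ℚ[X]) f a, qY (ℚ[X]) f - qι (ℚ[X]) f b}).map e =
        mumfordIdeal f a b := by
    simp [e, Ideal.map_span, Set.image_insert_eq, mumfordIdeal]
  simp_rw [← classEq_map_iff e, hspan]
  exact existsUnique_isMumfordPair_classEq hdeg
    ((Ideal.map_eq_bot_iff_of_injective e.injective).not.mpr hJ.ne_bot)

/-- Mumford representation.  Let `f ∈ ℚ[X]` be square-free monic of
degree `2g+1`, `g ≥ 1`, and `S = ℚ[X,Y]/(Y² - f)`.  Every element of the class group of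
`S` (i.e. the class of any invertible ideal `J` of `S`) is the class of the ideal
`(a, y - b)` for a unique pair `(a, b)` with `a` monic, `deg b < deg a ≤ g` and
`a ∣ b² - f`. -/
theorem mumford_representation (g : ℕ) (hg : 1 ≤ g) (f : ℚ[X]) (hmonic : f.Monic)
    (hdeg : f.natDegree = 2 * g + 1) (hsf : Squarefree f) :
    ∀ J : Ideal (QAlg (ℚ[X]) f), IsInvIdeal J →
      ∃! p : ℚ[X] × ℚ[X],
        (p.1.Monic ∧ p.2.degree < p.1.degree ∧ p.1.natDegree ≤ g ∧ p.1 ∣ p.2 ^ 2 - f) ∧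
          ClassEq J (Ideal.span {qι (ℚ[X]) f p.1, qY (ℚ[X]) f - qι (ℚ[X]) f p.2}) :=
  mumford_representation_general g f hdeg
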